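/- Let X ∈ R^{s×r} with XᵀX = I, U ∈ R^{s×r} with UᵀU = I, Σ an r×r diagonal matrix with nonnegative entries, and let D̃ be an orthogonal r×r matrix maximizing ⟨D, XᵀUΣ²⟩ over all orthogonal D. Then ‖XᵀUΣ‖_F² ≤ ⟨D̃, XᵀUΣ²⟩. -/

import Mathlib

/-!
Write `M = XᵀU` and `A = MΣ²`, so that `‖MΣ‖_F² = tr (MᵀA)`; `M` is a contraction because `X`
and `U` have orthonormal columns. Maximality of `D` says that `B = DᵀA` satisfies
`tr (RB) ≤ tr B` for every orthogonal `R`. Plane rotations force `B` to be symmetric and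
Householder reflections force `xᵀBx ≥ 0`, so `B = SᵀS` is positive semidefinite. With `A = DB`,
`tr (MᵀA) = Σᵢ sᵢᵀ (MᵀD) sᵢ` over the rows `sᵢ` of `S`, and
`2 (Mx)·(Dx) ≤ |Mx|² + |Dx|² ≤ 2 |x|²` bounds each term by `sᵢᵀsᵢ`, whose sum is `tr B`.
-/

open Matrix

/-- Squared Frobenius norm of a matrix. -/
def frobSq {a b : ℕ} (M : Matrix (Fin a) (Fin b) ℝ) : ℝ := ∑ i, ∑ j, (M i j) ^ 2

/-- Trace (Frobenius) inner product of matrices. -/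
def innerM {a b : ℕ} (M N : Matrix (Fin a) (Fin b) ℝ) : ℝ := ∑ i, ∑ j, M i j * N i j

lemma innerM_eq_trace {a b : ℕ} (M N : Matrix (Fin a) (Fin b) ℝ) :
    innerM M N = trace (Mᵀ * N) := by
  simp only [innerM, trace, diag, mul_apply, transpose_apply]
  exact Finset.sum_comm

lemma frobSq_mul_diagonal {a b : ℕ} (M : Matrix (Fin a) (Fin b) ℝ) (d : Fin b → ℝ) :
    frobSq (M * diagonal d) = innerM M (M * (diagonal d * diagonal d)) := by
  simp only [frobSq, innerM, diagonal_mul_diagonal, mul_diagonal]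
  exact Finset.sum_congr rfl fun i _ => Finset.sum_congr rfl fun j _ => by ring

section Vectors

variable {m n : Type*} [Fintype m] [Fintype n]

lemma dotProduct_self_nonneg (v : n → ℝ) : 0 ≤ v ⬝ᵥ v := by
  simpa using dotProduct_star_self_nonneg v

lemma two_mul_dotProduct_le (u w : n → ℝ) : 2 * (u ⬝ᵥ w) ≤ u ⬝ᵥ u + w ⬝ᵥ w := by
  have := dotProduct_self_nonneg (u - w)
  simp only [sub_dotProduct, dotProduct_sub, dotProduct_comm w u] at this
  linarith

lemma mulVec_dotProduct_mulVec_self (Y : Matrix m n ℝ) (v : n → ℝ) :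
    (Y *ᵥ v) ⬝ᵥ (Y *ᵥ v) = v ⬝ᵥ ((Yᵀ * Y) *ᵥ v) := by
  symm
  rw [← mulVec_mulVec, dotProduct_mulVec v, vecMul_transpose]

lemma mulVec_dotProduct_mulVec_self_of_transpose_mul_self_eq_one [DecidableEq n]
    {U : Matrix m n ℝ} (hU : Uᵀ * U = 1) (v : n → ℝ) : (U *ᵥ v) ⬝ᵥ (U *ᵥ v) = v ⬝ᵥ v := by
  rw [mulVec_dotProduct_mulVec_self, hU, one_mulVec]

lemma transpose_mulVec_dotProduct_self_le [DecidableEq m] [DecidableEq n] {X : Matrix m n ℝ}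
    (hX : Xᵀ * X = 1) (w : m → ℝ) : (Xᵀ *ᵥ w) ⬝ᵥ (Xᵀ *ᵥ w) ≤ w ⬝ᵥ w := by
  set Y : Matrix m m ℝ := 1 - X * Xᵀ
  have hY : Yᵀ * Y = Y := by
    have : X * Xᵀ * (X * Xᵀ) = X * Xᵀ := by
      rw [Matrix.mul_assoc, ← Matrix.mul_assoc Xᵀ, hX, Matrix.one_mul]
    simp only [Y, transpose_sub, transpose_one, transpose_mul, transpose_transpose, sub_mul,
      mul_sub, one_mul, mul_one, this]
    abel
  have hXw : (Xᵀ *ᵥ w) ⬝ᵥ (Xᵀ *ᵥ w) = w ⬝ᵥ ((X * Xᵀ) *ᵥ w) := by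
    simpa using mulVec_dotProduct_mulVec_self Xᵀ w
  have := dotProduct_self_nonneg (Y *ᵥ w)
  rw [mulVec_dotProduct_mulVec_self, hY, sub_mulVec, one_mulVec, dotProduct_sub, ← hXw] at this
  linarith

end Vectors

section Orthogonal

variable {n : Type*} [Fintype n] [DecidableEq n]

open scoped MatrixOrder in
lemma trace_mul_le_trace_of_posSemidef {B C : Matrix n n ℝ} (hB : B.PosSemidef)
    (hC : ∀ x, x ⬝ᵥ (C *ᵥ x) ≤ x ⬝ᵥ x) : trace (C * B) ≤ trace B := by
  obtain ⟨S, rfl⟩ : ∃ S : Matrix n n ℝ, B = star S * S :=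
    CStarAlgebra.nonneg_iff_eq_star_mul_self.mp hB.nonneg
  rw [star_eq_conjTranspose, conjTranspose_eq_transpose_of_trivial, ← mul_assoc,
    trace_mul_comm, trace_mul_comm Sᵀ, trace, trace]
  exact Finset.sum_le_sum fun i _ => hC (S i)

lemma eq_zero_of_forall_mul_add_mul_le {a b : ℝ}
    (h : ∀ c s : ℝ, c ^ 2 + s ^ 2 = 1 → a * c + b * s ≤ a) : b = 0 := by
  by_contra hb
  set ρ := √(a ^ 2 + b ^ 2)
  have hρ : 0 < ρ := Real.sqrt_pos.mpr (by positivity)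
  have hρsq : ρ ^ 2 = a ^ 2 + b ^ 2 := Real.sq_sqrt (by positivity)
  have hρa : ρ ≤ a := by
    have := h (a / ρ) (b / ρ) (by field_simp; linarith)
    rwa [show a * (a / ρ) + b * (b / ρ) = ρ by field_simp; linarith] at this
  have : b ^ 2 ≤ 0 := by nlinarith
  exact hb (pow_eq_zero_iff two_ne_zero |>.mp (le_antisymm this (sq_nonneg b)))

def planeRotation (i j : n) (c s : ℝ) : Matrix n n ℝ :=
  1 + (c - 1) • (single i i 1 + single j j 1) + s • (single i j 1 - single j i 1)

lemma planeRotation_transpose_mul_self {i j : n} (hij : i ≠ j) {c s : ℝ}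
    (hcs : c ^ 2 + s ^ 2 = 1) : (planeRotation i j c s)ᵀ * planeRotation i j c s = 1 := by
  unfold planeRotation
  set H : Matrix n n ℝ := single i i 1 + single j j 1
  set K : Matrix n n ℝ := single i j 1 - single j i 1
  have hHt : Hᵀ = H := by simp [H]
  have hKt : Kᵀ = -K := by simp [K]
  have hHH : H * H = H := by simp [H, add_mul, mul_add, single_mul_single_of_ne, hij, hij.symm]
  have hHK : H * K = K := by
    simp [H, K, add_mul, mul_sub, single_mul_single_of_ne, hij, hij.symm]
  have hKH : K * H = K := by
    simp only [K, H, mul_add, sub_mul, single_mul_single_same, single_mul_single_of_ne, ne_eq,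
      hij, hij.symm, not_false_eq_true, mul_one, zero_sub, sub_zero]
    abel
  have hKK : K * K = -H := by
    simp only [K, H, mul_sub, sub_mul, single_mul_single_same, single_mul_single_of_ne, ne_eq,
      hij, hij.symm, not_false_eq_true, mul_one, zero_sub, sub_zero, neg_add_rev]
    abel
  simp only [transpose_add, transpose_one, transpose_smul, hHt, hKt, mul_add, add_mul, one_mul,
    mul_one, Matrix.smul_mul, Matrix.mul_smul, neg_mul, smul_neg, smul_smul, hHH, hHK, hKH, hKK]
  match_scalars <;> nlinarith

lemma trace_planeRotation_mul (i j : n) (c s : ℝ) (B : Matrix n n ℝ) :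
    trace (planeRotation i j c s * B) =
      trace B + (c - 1) * (B i i + B j j) + s * (B j i - B i j) := by
  simp only [planeRotation, add_mul, sub_mul, one_mul, smul_mul, trace_add, trace_sub,
    trace_smul, trace_single_mul, smul_eq_mul, one_mul]

lemma isSymm_of_forall_trace_mul_le {B : Matrix n n ℝ}
    (hB : ∀ R : Matrix n n ℝ, Rᵀ * R = 1 → trace (R * B) ≤ trace B) : B.IsSymm := by
  refine IsSymm.ext fun i j => ?_
  rcases eq_or_ne i j with rfl | hij
  · rfl
  refine sub_eq_zero.mp <| eq_zero_of_forall_mul_add_mul_le (a := B i i + B j j)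
    (b := B j i - B i j) fun c s hcs => ?_
  have := hB _ (planeRotation_transpose_mul_self hij hcs)
  rw [trace_planeRotation_mul] at this
  linarith

noncomputable def householder (v : n → ℝ) : Matrix n n ℝ := 1 - (2 / (v ⬝ᵥ v)) • vecMulVec v v

lemma householder_transpose_mul_self {v : n → ℝ} (hv : v ⬝ᵥ v ≠ 0) :
    (householder v)ᵀ * householder v = 1 := by
  simp only [householder, transpose_sub, transpose_one, transpose_smul, transpose_vecMulVec,
    sub_mul, mul_sub, one_mul, mul_one, Matrix.smul_mul, Matrix.mul_smul, vecMulVec_mul_vecMulVec,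
    vecMulVec_smul, smul_smul]
  match_scalars
  · rfl
  · rw [div_mul_cancel₀ _ hv]
    ring

lemma trace_householder_mul (v : n → ℝ) (B : Matrix n n ℝ) :
    trace (householder v * B) = trace B - 2 / (v ⬝ᵥ v) * (v ⬝ᵥ (B *ᵥ v)) := by
  rw [householder, sub_mul, one_mul, trace_sub, smul_mul, trace_smul, vecMulVec_mul,
    trace_vecMulVec, dotProduct_comm v (v ᵥ* B), ← dotProduct_mulVec, smul_eq_mul]

lemma posSemidef_of_forall_trace_mul_le {B : Matrix n n ℝ}
    (hB : ∀ R : Matrix n n ℝ, Rᵀ * R = 1 → trace (R * B) ≤ trace B) : B.PosSemidef := by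
  refine .of_dotProduct_mulVec_nonneg
    (isHermitian_iff_isSymm.mpr (isSymm_of_forall_trace_mul_le hB)) fun x => ?_
  rw [star_trivial]
  by_cases hx : x ⬝ᵥ x = 0
  · simp [dotProduct_self_eq_zero.mp hx]
  have := hB _ (householder_transpose_mul_self hx)
  rw [trace_householder_mul] at this
  have hpos : 0 < 2 / (x ⬝ᵥ x) := div_pos two_pos ((dotProduct_self_nonneg x).lt_of_ne' hx)
  nlinarith

theorem trace_transpose_mul_le_of_forall_orthogonal_le {A D N : Matrix n n ℝ} (hD : Dᵀ * D = 1)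
    (hmax : ∀ D' : Matrix n n ℝ, D'ᵀ * D' = 1 → trace (D'ᵀ * A) ≤ trace (Dᵀ * A))
    (hN : ∀ x, (N *ᵥ x) ⬝ᵥ (N *ᵥ x) ≤ x ⬝ᵥ x) : trace (Nᵀ * A) ≤ trace (Dᵀ * A) := by
  set B := Dᵀ * A
  have hB : B.PosSemidef := by
    refine posSemidef_of_forall_trace_mul_le fun R hR => ?_
    have hDR : (D * Rᵀ)ᵀ * (D * Rᵀ) = 1 := by
      rw [transpose_mul, transpose_transpose, Matrix.mul_assoc, ← Matrix.mul_assoc Dᵀ, hD,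
        Matrix.one_mul, mul_eq_one_comm.mp hR]
    simpa only [transpose_mul, transpose_transpose, Matrix.mul_assoc] using hmax _ hDR
  have hA : A = D * B := by rw [← Matrix.mul_assoc, mul_eq_one_comm.mp hD, Matrix.one_mul]
  rw [hA, ← Matrix.mul_assoc]
  refine trace_mul_le_trace_of_posSemidef hB fun x => ?_
  rw [← mulVec_mulVec, dotProduct_mulVec, vecMul_transpose]
  have := two_mul_dotProduct_le (N *ᵥ x) (D *ᵥ x)
  rw [mulVec_dotProduct_mulVec_self_of_transpose_mul_self_eq_one hD] at this
  linarith [hN x]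

end Orthogonal

theorem stmt_6_general {s r : ℕ} (X U : Matrix (Fin s) (Fin r) ℝ)
    (hX : Xᵀ * X = 1) (hU : Uᵀ * U = 1)
    (d : Fin r → ℝ)
    (D : Matrix (Fin r) (Fin r) ℝ) (hD : Dᵀ * D = 1)
    (hDmax : ∀ D' : Matrix (Fin r) (Fin r) ℝ, D'ᵀ * D' = 1 →
      innerM D' (Xᵀ * U * (Matrix.diagonal d * Matrix.diagonal d)) ≤
        innerM D (Xᵀ * U * (Matrix.diagonal d * Matrix.diagonal d))) :
    frobSq (Xᵀ * U * Matrix.diagonal d) ≤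
      innerM D (Xᵀ * U * (Matrix.diagonal d * Matrix.diagonal d)) := by
  have hXU : ∀ x, ((Xᵀ * U) *ᵥ x) ⬝ᵥ ((Xᵀ * U) *ᵥ x) ≤ x ⬝ᵥ x := fun x => by
    rw [← mulVec_mulVec, ← mulVec_dotProduct_mulVec_self_of_transpose_mul_self_eq_one hU x]
    exact transpose_mulVec_dotProduct_self_le hX (U *ᵥ x)
  rw [frobSq_mul_diagonal, innerM_eq_trace, innerM_eq_trace]
  exact trace_transpose_mul_le_of_forall_orthogonal_le hD
    (fun D' hD' => by simpa only [innerM_eq_trace] using hDmax D' hD') hXU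

/-- Let `X, U ∈ ℝ^{s×r}` have orthonormal columns, `Σ = diag d` with `d ≥ 0`, and let
`D̃` be an orthogonal matrix maximizing `⟨D, Xᵀ U Σ²⟩` over all orthogonal `D`.
Then `‖Xᵀ U Σ‖_F² ≤ ⟨D̃, Xᵀ U Σ²⟩`. -/
theorem stmt_6 {s r : ℕ} (X U : Matrix (Fin s) (Fin r) ℝ)
    (hX : Xᵀ * X = 1) (hU : Uᵀ * U = 1)
    (d : Fin r → ℝ) (hd : ∀ i, 0 ≤ d i)
    (D : Matrix (Fin r) (Fin r) ℝ) (hD : Dᵀ * D = 1)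
    (hDmax : ∀ D' : Matrix (Fin r) (Fin r) ℝ, D'ᵀ * D' = 1 →
      innerM D' (Xᵀ * U * (Matrix.diagonal d * Matrix.diagonal d)) ≤
        innerM D (Xᵀ * U * (Matrix.diagonal d * Matrix.diagonal d))) :
    frobSq (Xᵀ * U * Matrix.diagonal d) ≤
      innerM D (Xᵀ * U * (Matrix.diagonal d * Matrix.diagonal d)) :=
  stmt_6_general X U hX hU d D hD hDmax
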